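/- Let a ≥ 3 be an odd integer and let p, q be integers with 0 ≤ p < q, p + q odd, and p + q ≤ a. Then the line L = {(x, y) ∈ ℝ² : p·x = q·y} is disjoint from the open square of center ((2U+1)/(2a^N), (2V+1)/(2a^N)) and side length 1/a^{N+1}, for every natural number N and all integers U, V. In particular, a line through the origin with slope in A_a avoids every open square omitted in the construction of the Sierpinski carpet S_a. -/

import Mathlib

/-!
If `z` lies on the line `p x = q y` and in the square with center `(c, d)` and half-side `r`,
then `p c - q d = q (z₂ - d) - p (z₁ - c)`, so `|p c - q d| < (p + q) r`. For the carpet squares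
`p c - q d = (p (2U+1) - q (2V+1)) / (2aᴺ)` and `(p + q) r ≤ 1 / (2aᴺ)` because `p + q ≤ a`, so the
integer `p (2U+1) - q (2V+1)` has absolute value `< 1`. It is odd because `p + q` is, a contradiction.
-/

/-- The open axis-parallel square with center `((2U+1)/(2a^N), (2V+1)/(2a^N))`
and side length `1/a^(N+1)`; for `0 ≤ U, V ≤ a^N - 1` these are the open squares
removed at stage `N+1` of the construction of the Sierpinski carpet `S_a`. -/
def carpetOpenSquare (a : ℤ) (N : ℕ) (U V : ℤ) : Set (ℝ × ℝ) :=
  {z | |z.1 - (2 * (U : ℝ) + 1) / (2 * (a : ℝ) ^ N)| < 1 / (2 * (a : ℝ) ^ (N + 1)) ∧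
       |z.2 - (2 * (V : ℝ) + 1) / (2 * (a : ℝ) ^ N)| < 1 / (2 * (a : ℝ) ^ (N + 1))}

theorem abs_mul_sub_mul_lt_of_mem_line {p q c d r : ℝ} {z : ℝ × ℝ} (hp : 0 ≤ p) (hq : 0 < q)
    (hz : p * z.1 = q * z.2) (hx : |z.1 - c| < r) (hy : |z.2 - d| < r) :
    |p * c - q * d| < (p + q) * r := by
  have hsplit : p * c - q * d = q * (z.2 - d) - p * (z.1 - c) := by linear_combination hz
  have hqy : q * |z.2 - d| < q * r := mul_lt_mul_of_pos_left hy hq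
  have hpx : p * |z.1 - c| ≤ p * r := mul_le_mul_of_nonneg_left hx.le hp
  calc |p * c - q * d| ≤ |q * (z.2 - d)| + |p * (z.1 - c)| := hsplit ▸ abs_sub _ _
    _ = q * |z.2 - d| + p * |z.1 - c| := by rw [abs_mul, abs_mul, abs_of_pos hq, abs_of_nonneg hp]
    _ < (p + q) * r := by linarith

theorem abs_lt_one_of_mem_line_of_mem_carpetOpenSquare {a p q : ℤ} {N : ℕ} {U V : ℤ}
    {z : ℝ × ℝ} (hp : 0 ≤ p) (hq : 0 < q) (hsum : p + q ≤ a)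
    (hz : (p : ℝ) * z.1 = (q : ℝ) * z.2) (hsq : z ∈ carpetOpenSquare a N U V) :
    |p * (2 * U + 1) - q * (2 * V + 1)| < 1 := by
  obtain ⟨hx, hy⟩ := hsq
  have ha : (0 : ℝ) < a := by exact_mod_cast (show 0 < a by omega)
  have haN : (0 : ℝ) < 2 * (a : ℝ) ^ N := by positivity
  have hlt := abs_mul_sub_mul_lt_of_mem_line (by exact_mod_cast hp) (by exact_mod_cast hq) hz hx hy
  have hnum : (p : ℝ) * ((2 * U + 1) / (2 * (a : ℝ) ^ N)) - q * ((2 * V + 1) / (2 * (a : ℝ) ^ N))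
      = ((p * (2 * U + 1) - q * (2 * V + 1) : ℤ) : ℝ) / (2 * (a : ℝ) ^ N) := by
    push_cast; ring
  have hrad : ((p : ℝ) + q) * (1 / (2 * (a : ℝ) ^ (N + 1))) ≤ 1 / (2 * (a : ℝ) ^ N) := by
    rw [pow_succ, ← mul_assoc, mul_one_div, div_le_div_iff₀ (by positivity) haN]
    nlinarith [(by exact_mod_cast hsum : (p : ℝ) + q ≤ a)]
  rw [hnum, abs_div, abs_of_pos haN] at hlt
  exact_mod_cast (div_lt_div_iff_of_pos_right haN).mp (hlt.trans_le hrad)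

theorem odd_mul_sub_mul_of_odd_add {p q : ℤ} (hodd : Odd (p + q)) (U V : ℤ) :
    Odd (p * (2 * U + 1) - q * (2 * V + 1)) := by
  obtain ⟨k, hk⟩ := hodd
  exact ⟨k - q + p * U - q * V, by linear_combination hk⟩

theorem Aslope_line_disjoint_from_open_squares_general
    (a p q : ℤ)
    (hp : 0 ≤ p) (hpq : p < q) (hodd : Odd (p + q)) (hsum : p + q ≤ a) :
    ∀ (N : ℕ) (U V : ℤ),
      Disjoint {z : ℝ × ℝ | (p : ℝ) * z.1 = (q : ℝ) * z.2}
        (carpetOpenSquare a N U V) := by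
  intro N U V
  rw [Set.disjoint_left]
  intro z hz hsq
  have hzero := Int.abs_lt_one_iff.mp
    (abs_lt_one_of_mem_line_of_mem_carpetOpenSquare hp (hp.trans_lt hpq) hsum hz hsq)
  exact Int.not_odd_zero (hzero ▸ odd_mul_sub_mul_of_odd_add hodd U V)

theorem Aslope_line_disjoint_from_open_squares
    (a p q : ℤ) (ha_odd : Odd a) (ha : 3 ≤ a)
    (hp : 0 ≤ p) (hpq : p < q) (hodd : Odd (p + q)) (hsum : p + q ≤ a) :
    ∀ (N : ℕ) (U V : ℤ),
      Disjoint {z : ℝ × ℝ | (p : ℝ) * z.1 = (q : ℝ) * z.2}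
        (carpetOpenSquare a N U V) :=
  Aslope_line_disjoint_from_open_squares_general a p q hp hpq hodd hsum
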